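/- arXiv:2412.13610 — 4 statements merged into one kernel-verified Lean document; each statement's English description precedes it below -/
import Mathlib

section
/- For positive integer T, θ > 0, ψ ≥ 0, a ∈ ℝ with a·T + ψ ≥ 0, the number of indices x ∈ {1, …, T} satisfying a·T + ψ ≥ (T - x + 1)·θ equals min(T, ⌊(a·T + ψ)/θ⌋) when ⌊(a·T+ψ)/θ⌋ ≥ 0, i.e., equals Clip(⌊(a·T + ψ)/θ⌋, 0, T). -/
open Finset in
/-- The number of firing steps equals the clipped quantization level. -/
theorem spike_count_eq_clip (T : ℕ) (hT : 0 < T) (θ ψ a : ℝ) (hθ : 0 < θ)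
    (hψ : 0 ≤ ψ) (ha : 0 ≤ a * T + ψ) :
    (((Finset.Icc 1 T).filter
        (fun x : ℕ => ((T : ℝ) - x + 1) * θ ≤ a * T + ψ)).card : ℤ) =
      min (max ⌊(a * T + ψ) / θ⌋ 0) (T : ℤ) := by
  have hf0 : 0 ≤ ⌊(a * T + ψ) / θ⌋ := Int.floor_nonneg.mpr (div_nonneg ha hθ.le)
  set f : ℤ := ⌊(a * T + ψ) / θ⌋ with hfdef
  set m : ℕ := min f.toNat T with hm
  have hmT : m ≤ T := min_le_right _ _
  have hset : (Finset.Icc 1 T).filter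
      (fun x : ℕ => ((T : ℝ) - x + 1) * θ ≤ a * T + ψ) = Finset.Icc (T - m + 1) T := by
    ext x
    simp only [Finset.mem_filter, Finset.mem_Icc]
    constructor
    · rintro ⟨⟨h1, h2⟩, h3⟩
      refine ⟨?_, h2⟩
      have : ((T : ℤ) + 1 - x) ≤ f := by
        rw [hfdef, Int.le_floor, le_div_iff₀ hθ]
        push_cast
        linarith
      omega
    · rintro ⟨h1, h2⟩
      have hx1 : 1 ≤ x := by omega
      refine ⟨⟨hx1, h2⟩, ?_⟩
      have h4 : ((T : ℤ) + 1 - x) ≤ f := by omega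
      have h5 : (((T : ℤ) + 1 - x : ℤ) : ℝ) ≤ (a * T + ψ) / θ := by
        calc (((T : ℤ) + 1 - x : ℤ) : ℝ) ≤ (f : ℝ) := by exact_mod_cast h4
          _ ≤ (a * T + ψ) / θ := Int.floor_le _
      rw [le_div_iff₀ hθ] at h5
      push_cast at h5
      linarith
  rw [hset, Nat.card_Icc]
  have : T + 1 - (T - m + 1) = m := by omega
  rw [this]
  omega
end

section
/- Theorem 4.1(i): Let T be a positive integer, θ > 0, ψ ∈ ℝ, and a ∈ ℝ the average input current. Define the total spike count N = #{x ∈ {1,…,T} : a·T + ψ ≥ (T - x + 1)·θ} and the firing rate r_SNN = N·θ/T. Define r_QCFS = (θ/T)·Clip(⌊(a·T + ψ)/θ⌋, 0, T). Then r_SNN = r_QCFS. -/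
open Finset in
/-- Theorem 4.1(i): the parallel SNN firing rate equals the QCFS output. -/
theorem parallel_rate_eq_qcfs (T : ℕ) (hT : 0 < T) (θ ψ a : ℝ) (hθ : 0 < θ) :
    (θ / T) * (((Finset.Icc 1 T).filter
        (fun x : ℕ => ((T : ℝ) - x + 1) * θ ≤ a * T + ψ)).card : ℝ) =
      (θ / T) * ((min (max ⌊(a * T + ψ) / θ⌋ 0) (T : ℤ) : ℤ) : ℝ) := by
  set m : ℤ := ⌊(a * T + ψ) / θ⌋ with hm
  set k : ℕ := (min (max m 0) (T : ℤ)).toNat with hk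
  have hkT : k ≤ T := by
    have : min (max m 0) (T : ℤ) ≤ (T : ℤ) := min_le_right _ _
    omega
  have hkk : ((min (max m 0) (T : ℤ) : ℤ) : ℝ) = (k : ℝ) := by
    have h0 : (0 : ℤ) ≤ min (max m 0) (T : ℤ) := le_min (le_max_right _ _) (by positivity)
    exact_mod_cast congrArg (Int.cast : ℤ → ℝ) (Int.toNat_of_nonneg h0).symm
  rw [hkk]
  congr 1
  have key : ∀ x : ℕ, (((T : ℝ) - x + 1) * θ ≤ a * T + ψ) ↔ ((T : ℤ) - x + 1 ≤ m) := by
    intro x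
    rw [hm, Int.le_floor]
    push_cast
    rw [le_div_iff₀ hθ]
  have hset : (Finset.Icc 1 T).filter
      (fun x : ℕ => ((T : ℝ) - x + 1) * θ ≤ a * T + ψ) = Finset.Icc (T + 1 - k) T := by
    ext x
    simp only [mem_filter, mem_Icc, key]
    constructor
    · rintro ⟨⟨h1, h2⟩, h3⟩
      have : (x : ℤ) ≤ T := by exact_mod_cast h2
      have hmx : (T : ℤ) + 1 - x ≤ m := by omega
      have : (T : ℤ) + 1 - x ≤ min (max m 0) (T : ℤ) := by
        refine le_min (le_max_of_le_left hmx) ?_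
        omega
      constructor
      · omega
      · exact h2
    · rintro ⟨h1, h2⟩
      have hk1 : 1 ≤ k := by
        by_contra h
        have : k = 0 := by omega
        omega
      have hkm : (k : ℤ) ≤ m := by
        have h0 : (0 : ℤ) ≤ min (max m 0) (T : ℤ) := le_min (le_max_right _ _) (by positivity)
        have hmin : min (max m 0) (T : ℤ) ≤ max m 0 := min_le_left _ _
        have : max m 0 = m := by
          rcases le_or_gt 0 m with h' | h'
          · exact max_eq_left h'
          · exfalso
            have : min (max m 0) (T : ℤ) = 0 := by omega
            omega
        omega
      refine ⟨⟨by omega, h2⟩, ?_⟩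
      have : (T : ℤ) + 1 - k ≤ x := by
        have := h1
        omega
      omega
  rw [hset, Nat.card_Icc]
  have : T + 1 - (T + 1 - k) = k := by omega
  rw [this]
end

section
/- With b_x = ψ/(T - x + 1) for x = 1,…,T, if the input current a satisfies kθ - ψ ≤ a·T < (k+1)θ - ψ for some integer k with 1 ≤ k ≤ T, then the parallel neuron fires exactly at steps x = T - k + 1, T - k + 2, …, T, producing exactly k spikes. -/
open Finset in
/-- If kθ - ψ ≤ a·T < (k+1)θ - ψ, the parallel neuron fires exactly at steps
T-k+1, …, T, producing exactly k spikes. -/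
theorem fires_last_k_steps (T : ℕ) (hT : 0 < T) (θ ψ a : ℝ) (hθ : 0 < θ)
    (k : ℤ) (hk1 : 1 ≤ k) (hk2 : k ≤ (T : ℤ))
    (h1 : k * θ - ψ ≤ a * T) (h2 : a * T < (k + 1) * θ - ψ) :
    (∀ x : ℕ, 1 ≤ x → x ≤ T →
      (((T : ℝ) / ((T : ℝ) - x + 1)) * a + ψ / ((T : ℝ) - x + 1) ≥ θ ↔
        (T : ℤ) - k + 1 ≤ (x : ℤ))) ∧
    (((Finset.Icc 1 T).filter
        (fun x : ℕ => ((T : ℝ) / ((T : ℝ) - x + 1)) * a + ψ / ((T : ℝ) - x + 1) ≥ θ)).card : ℤ)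
      = k := by
  have hknk : ((k.toNat : ℤ)) = k := Int.toNat_of_nonneg (by linarith)
  have key : ∀ x : ℕ, 1 ≤ x → x ≤ T →
      (((T : ℝ) / ((T : ℝ) - x + 1)) * a + ψ / ((T : ℝ) - x + 1) ≥ θ ↔
        (T : ℤ) - k + 1 ≤ (x : ℤ)) := by
    intro x hx1 hx2
    have hxT : (x : ℝ) ≤ T := by exact_mod_cast hx2
    have hd : (0:ℝ) < (T : ℝ) - x + 1 := by linarith
    have heq : (T : ℝ) / ((T : ℝ) - x + 1) * a + ψ / ((T : ℝ) - x + 1)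
        = (a * T + ψ) / ((T : ℝ) - x + 1) := by
      field_simp
    rw [heq, ge_iff_le, le_div_iff₀ hd]
    constructor
    · intro h
      have h3 : θ * ((T : ℝ) - x + 1) < θ * (k + 1) := by
        have : (a:ℝ) * T + ψ < (k + 1) * θ := by push_cast; linarith
        nlinarith
      have h4 : ((T : ℝ) - x + 1) < (k : ℝ) + 1 := by
        exact lt_of_mul_lt_mul_left (by nlinarith) (le_of_lt hθ)
      have h6 : ((T : ℤ) - x + 1 : ℤ) < k + 1 := by exact_mod_cast (by push_cast; linarith : (((T : ℤ) - x + 1 : ℤ) : ℝ) < ((k + 1 : ℤ) : ℝ))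
      omega
    · intro h
      have h5 : ((T : ℝ) - x + 1) ≤ (k : ℝ) := by
        have h7 : ((T : ℤ) - x + 1 : ℤ) ≤ k := by omega
        have := (@Int.cast_le ℝ _ _ _).mpr h7
        push_cast at this
        linarith
      nlinarith
  refine ⟨key, ?_⟩
  have hfilt : (Finset.Icc 1 T).filter
      (fun x : ℕ => ((T : ℝ) / ((T : ℝ) - x + 1)) * a + ψ / ((T : ℝ) - x + 1) ≥ θ)
      = (Finset.Icc 1 T).filter (fun x : ℕ => T - k.toNat + 1 ≤ x) := by
    apply Finset.filter_congr
    intro x hx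
    simp only [Finset.mem_Icc] at hx
    rw [key x hx.1 hx.2]
    omega
  rw [hfilt]
  have : (Finset.Icc 1 T).filter (fun x : ℕ => T - k.toNat + 1 ≤ x)
      = Finset.Icc (T - k.toNat + 1) T := by
    ext x
    simp only [Finset.mem_filter, Finset.mem_Icc]
    omega
  rw [this, Nat.card_Icc]
  omega
end

section
/- Let q : ℝ → ℤ, q(a) = Clip(⌊(a·T + ψ)/θ⌋, 0, T) and let N(a) = #{x ∈ {1,…,T} : a·T + ψ ≥ (T−x+1)·θ}. Then for all a ∈ ℝ with a·T + ψ ≥ 0, N(a) = q(a); moreover both sides equal T − t_fir(a) + 1 where t_fir(a) = min{x : a·T + ψ ≥ (T−x+1)·θ} when this set is nonempty, and N(a) = 0 otherwise. -/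
open Finset in
/-- Spike count equals the QCFS quantization level, and when some step fires
both equal T − t_fir + 1, where t_fir is the first firing step; otherwise the
spike count is 0. -/
theorem spike_count_first_spike (T : ℕ) (hT : 0 < T) (θ ψ : ℝ) (hθ : 0 < θ)
    (hψ : 0 ≤ ψ) (a : ℝ) (ha : 0 ≤ a * T + ψ) :
    ((((Finset.Icc 1 T).filter
        (fun x : ℕ => ((T : ℝ) - x + 1) * θ ≤ a * T + ψ)).card : ℤ) =
      min (max ⌊(a * T + ψ) / θ⌋ 0) (T : ℤ)) ∧
    (∀ h : ((Finset.Icc 1 T).filter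
        (fun x : ℕ => ((T : ℝ) - x + 1) * θ ≤ a * T + ψ)).Nonempty,
      ((((Finset.Icc 1 T).filter
          (fun x : ℕ => ((T : ℝ) - x + 1) * θ ≤ a * T + ψ)).card : ℤ) =
        (T : ℤ) - (((Finset.Icc 1 T).filter
          (fun x : ℕ => ((T : ℝ) - x + 1) * θ ≤ a * T + ψ)).min' h : ℤ) + 1) ∧
      (min (max ⌊(a * T + ψ) / θ⌋ 0) (T : ℤ) =
        (T : ℤ) - (((Finset.Icc 1 T).filter
          (fun x : ℕ => ((T : ℝ) - x + 1) * θ ≤ a * T + ψ)).min' h : ℤ) + 1)) ∧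
    (¬((Finset.Icc 1 T).filter
        (fun x : ℕ => ((T : ℝ) - x + 1) * θ ≤ a * T + ψ)).Nonempty →
      ((Finset.Icc 1 T).filter
        (fun x : ℕ => ((T : ℝ) - x + 1) * θ ≤ a * T + ψ)).card = 0) := by

  have hk0 : (0:ℤ) ≤ ⌊(a * T + ψ) / θ⌋ := Int.floor_nonneg.2 (div_nonneg ha hθ.le)
  set kn := (⌊(a * T + ψ) / θ⌋).toNat with hkn
  have hknk : (kn : ℤ) = ⌊(a * T + ψ) / θ⌋ := Int.toNat_of_nonneg hk0
  have hcond : ∀ x : ℕ, (((T:ℝ) - x + 1) * θ ≤ a * T + ψ ↔ (T:ℤ) + 1 - x ≤ (kn:ℤ)) := by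
    intro x
    rw [hknk, Int.le_floor, le_div_iff₀ hθ]
    push_cast
    constructor <;> intro h <;> linarith
  have hset : (Finset.Icc 1 T).filter (fun x : ℕ => ((T : ℝ) - x + 1) * θ ≤ a * T + ψ)
      = Finset.Icc (max 1 (T + 1 - kn)) T := by
    ext x
    simp only [Finset.mem_filter, Finset.mem_Icc, hcond x, max_le_iff]
    omega
  rw [hset]
  have hcard : (Finset.Icc (max 1 (T + 1 - kn)) T).card = T + 1 - max 1 (T + 1 - kn) :=
    Nat.card_Icc _ _
  have hmaxk : max ⌊(a * T + ψ) / θ⌋ 0 = (kn:ℤ) := by omega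
  refine ⟨?_, ?_, ?_⟩
  · rw [hcard, hmaxk]
    push_cast
    omega
  · intro h
    have hne : max 1 (T + 1 - kn) ≤ T := Finset.nonempty_Icc.1 h
    have hmin : (Finset.Icc (max 1 (T + 1 - kn)) T).min' h = max 1 (T + 1 - kn) := by
      refine le_antisymm (Finset.min'_le _ _ ?_) (Finset.le_min' _ _ _ ?_)
      · simp [Finset.mem_Icc, hne]
      · intro y hy
        exact (Finset.mem_Icc.1 hy).1
    rw [hmin, hcard, hmaxk]
    constructor <;> · push_cast; omega
  · intro h
    have : ¬ max 1 (T + 1 - kn) ≤ T := fun hle => h (Finset.nonempty_Icc.2 hle)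
    rw [hcard]; omega
end
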